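/- arXiv:1709.09594 — 7 statements merged into one kernel-verified Lean document; each statement's English description precedes it below -/
import Mathlib

section
/- Lemma 1 (hypergraph form): Let H be a k-uniform hypergraph on a finite vertex set V with edge set E, and let v_i, v_j ∈ V be vertices with d(v_i) ≥ d(v_j) + 2 and d(v_j) ≥ 1. Suppose e ∈ E with v_i ∈ e and v_j ∉ e, set e' = (e \ {v_i}) ∪ {v_j}, and assume e' ∉ E. Let H' be the hypergraph on V with edge set (E \ {e}) ∪ {e'}. Then h(H) > h(H'), where h(H) = Σ_{v ∈ V} d_H(v)·log₂ d_H(v) and h(H') = Σ_{v ∈ V} d_{H'}(v)·log₂ d_{H'}(v). -/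
open Finset

/-- Degree of a vertex in a hypergraph given by its edge set. -/
def hdeg {V : Type*} [DecidableEq V] (E : Finset (Finset V)) (v : V) : ℕ :=
  (E.filter (fun e => v ∈ e)).card

/-- `h(H) = Σ_{v ∈ V} d(v)·log₂ d(v)`. -/
noncomputable def hval {V : Type*} [Fintype V] [DecidableEq V]
    (E : Finset (Finset V)) : ℝ :=
  ∑ v : V, (hdeg E v : ℝ) * Real.logb 2 (hdeg E v)

lemma mul_log_slope {a b : ℝ} (hb : 0 ≤ b) (hab : b + 2 ≤ a) :
    (b+1) * Real.log (b+1) - b * Real.log b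
      < a * Real.log a - (a-1) * Real.log (a-1) := by
  have hcv := Real.strictConvexOn_mul_log
  have hb1 : (b:ℝ) ∈ Set.Ici (0:ℝ) := hb
  have hb2 : (b+1:ℝ) ∈ Set.Ici (0:ℝ) := by simp [Set.mem_Ici]; linarith
  have ha1 : (a-1:ℝ) ∈ Set.Ici (0:ℝ) := by simp [Set.mem_Ici]; linarith
  have ha2 : (a:ℝ) ∈ Set.Ici (0:ℝ) := by simp [Set.mem_Ici]; linarith
  rcases eq_or_lt_of_le (show b + 1 ≤ a - 1 by linarith) with hEq | hLt
  · have h := hcv.secant_strict_mono hb2 hb1 ha2 (by linarith) (by linarith) (by linarith)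
    rw [show b - (b+1) = -1 by ring, show a - (b+1) = 1 by linarith] at h
    rw [← hEq]
    simp only [div_one, div_neg, div_one] at h
    linarith
  · have h1 := hcv.secant_strict_mono hb2 hb1 ha1 (by linarith) (by linarith) (by linarith)
    have h2 := hcv.secant_strict_mono ha1 hb2 ha2 (by linarith) (by linarith) (by linarith)
    rw [show b - (b+1) = -1 by ring] at h1
    rw [show a - (a-1) = 1 by ring] at h2
    rw [show (b+1) * Real.log (b+1) - (a-1) * Real.log (a-1)
        = -((a-1) * Real.log (a-1) - (b+1) * Real.log (b+1)) by ring,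
        show (b+1) - (a-1) = -((a-1) - (b+1)) by ring, neg_div_neg_eq] at h2
    simp only [div_one, div_neg, div_one] at h1 h2
    linarith

lemma mul_logb_key {a b : ℝ} (hb : 1 ≤ b) (hab : b + 2 ≤ a) :
    (a-1) * Real.logb 2 (a-1) + (b+1) * Real.logb 2 (b+1)
      < a * Real.logb 2 a + b * Real.logb 2 b := by
  have h2 : (0:ℝ) < Real.log 2 := Real.log_pos (by norm_num)
  have key := mul_log_slope (by linarith : (0:ℝ) ≤ b) hab
  simp only [Real.logb, div_eq_mul_inv]
  rw [show (a-1) * (Real.log (a-1) * (Real.log 2)⁻¹) + (b+1) * (Real.log (b+1) * (Real.log 2)⁻¹)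
      = ((a-1) * Real.log (a-1) + (b+1) * Real.log (b+1)) * (Real.log 2)⁻¹ by ring,
     show a * (Real.log a * (Real.log 2)⁻¹) + b * (Real.log b * (Real.log 2)⁻¹)
      = (a * Real.log a + b * Real.log b) * (Real.log 2)⁻¹ by ring]
  apply mul_lt_mul_of_pos_right _ (inv_pos.mpr h2)
  linarith

lemma hdeg_swap {V : Type*} [DecidableEq V] (E : Finset (Finset V))
    (e e' : Finset V) (he : e ∈ E) (he' : e' ∉ E) (v : V) :
    hdeg ((E.erase e) ∪ {e'}) v
      = hdeg E v - (if v ∈ e then 1 else 0) + (if v ∈ e' then 1 else 0) := by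
  unfold hdeg
  rw [filter_union, card_union_of_disjoint, filter_erase, card_erase_eq_ite]
  · congr 1
    · split_ifs with h h2 h2
      · rfl
      · exact absurd (mem_filter.1 h).2 h2
      · exact absurd (mem_filter.2 ⟨he, h2⟩) h
      · rfl
    · rw [filter_singleton]; split <;> simp
  · simp only [disjoint_right, mem_filter, filter_singleton]
    intro s hs
    split at hs
    · simp only [mem_singleton] at hs
      subst hs
      exact fun h => he' (mem_of_mem_erase h.1)
    · exact absurd hs (notMem_empty s)

/-- Lemma 1 (hypergraph form): moving the edge `e` from `v_i` (of degree at least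
`d(v_j) + 2`) to `v_j` strictly decreases `h`. -/
theorem stmt_1 {V : Type*} [Fintype V] [DecidableEq V] (k : ℕ) (hk : 3 ≤ k)
    (E : Finset (Finset V)) (hunif : ∀ e ∈ E, e.card = k)
    (vi vj : V) (hdij : hdeg E vj + 2 ≤ hdeg E vi) (hdj : 1 ≤ hdeg E vj)
    (e : Finset V) (he : e ∈ E) (hvi : vi ∈ e) (hvj : vj ∉ e)
    (hnew : insert vj (e.erase vi) ∉ E) :
    hval ((E.erase e) ∪ {insert vj (e.erase vi)}) < hval E := by
  set e' : Finset V := insert vj (e.erase vi) with he'def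
  set E' : Finset (Finset V) := (E.erase e) ∪ {e'} with hE'def
  have hij : vi ≠ vj := fun h => hvj (h ▸ hvi)
  have hvie' : vi ∉ e' := by
    simp only [he'def, mem_insert, mem_erase]
    push_neg
    exact ⟨hij, fun h => absurd rfl h⟩
  have hvje' : vj ∈ e' := mem_insert_self _ _
  have hmem : ∀ v : V, v ≠ vi → v ≠ vj → (v ∈ e' ↔ v ∈ e) := by
    intro v hvvi hvvj
    simp only [he'def, mem_insert, mem_erase]
    constructor
    · rintro (h | ⟨-, h⟩)
      · exact absurd h hvvj
      · exact h
    · exact fun h => Or.inr ⟨hvvi, h⟩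
  set a := hdeg E vi with hadef
  set b := hdeg E vj with hbdef
  have ha1 : 1 ≤ a := by omega
  have hdvi : hdeg E' vi = a - 1 := by
    rw [hE'def, hdeg_swap E e e' he hnew, if_pos hvi, if_neg hvie']
    omega
  have hdvj : hdeg E' vj = b + 1 := by
    rw [hE'def, hdeg_swap E e e' he hnew, if_neg hvj, if_pos hvje']
    omega
  have hdother : ∀ v : V, v ≠ vi → v ≠ vj → hdeg E' v = hdeg E v := by
    intro v hvvi hvvj
    rw [hE'def, hdeg_swap E e e' he hnew]
    by_cases h : v ∈ e
    · rw [if_pos h, if_pos ((hmem v hvvi hvvj).2 h)]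
      have : 1 ≤ hdeg E v := card_pos.2 ⟨e, mem_filter.2 ⟨he, h⟩⟩
      omega
    · rw [if_neg h, if_neg (fun h' => h ((hmem v hvvi hvvj).1 h'))]
      omega
  -- sum manipulation
  set F : V → ℝ := fun v => (hdeg E v : ℝ) * Real.logb 2 (hdeg E v) with hF
  set F' : V → ℝ := fun v => (hdeg E' v : ℝ) * Real.logb 2 (hdeg E' v) with hF'
  have hsum : hval E' - hval E = (F' vi - F vi) + (F' vj - F vj) := by
    rw [hval, hval, ← Finset.sum_sub_distrib]
    rw [show (∑ v : V, ((hdeg E' v : ℝ) * Real.logb 2 (hdeg E' v)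
          - (hdeg E v : ℝ) * Real.logb 2 (hdeg E v)))
        = ∑ v ∈ ({vi, vj} : Finset V), (F' v - F v) from
      (Finset.sum_subset (subset_univ _) ?_).symm]
    · rw [Finset.sum_pair hij]
    · intro v _ hv
      simp only [mem_insert, mem_singleton, not_or] at hv
      simp [hF, hF', hdother v hv.1 hv.2]
  have hkey : F' vi + F' vj < F vi + F vj := by
    have hcast1 : ((hdeg E' vi : ℕ) : ℝ) = (a : ℝ) - 1 := by
      rw [hdvi]; push_cast [Nat.cast_sub ha1]; ring
    have hcast2 : ((hdeg E' vj : ℕ) : ℝ) = (b : ℝ) + 1 := by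
      rw [hdvj]; push_cast; ring
    have := mul_logb_key (a := (a:ℝ)) (b := (b:ℝ))
      (by exact_mod_cast hdj) (by exact_mod_cast hdij)
    simp only [hF, hF', hcast1, hcast2]
    convert this using 3
  linarith [hsum, hkey]
end

section
/- Lemma 3 (hypergraph form): Let H be a k-uniform hypergraph on a finite vertex set V with edge set E, and let v_i, v_j ∈ V be vertices with d(v_i) ≥ d(v_j). Suppose e ∈ E with v_j ∈ e and v_i ∉ e, set e' = (e \ {v_j}) ∪ {v_i}, and assume e' ∉ E. Let H' be the hypergraph on V with edge set (E \ {e}) ∪ {e'}. Then h(H) < h(H'), where h(H) = Σ_{v ∈ V} d_H(v)·log₂ d_H(v) and h(H') = Σ_{v ∈ V} d_{H'}(v)·log₂ d_{H'}(v). -/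
/-!
Replacing `e` by `e'` changes only two degrees: `d(v_j)` drops from `b + 1` to `b` and `d(v_i)`
rises from `a` to `a + 1`, where `b < a`. As `x ↦ x log₂ x` is strictly convex, its unit increments
strictly increase, so the gain at `v_i` exceeds the loss at `v_j`.
-/

open Finset

theorem StrictConvexOn.sub_lt_sub_of_lt {𝕜 : Type*} [Field 𝕜] [LinearOrder 𝕜]
    [IsStrictOrderedRing 𝕜] {s : Set 𝕜} {f : 𝕜 → 𝕜} (hf : StrictConvexOn 𝕜 s f)
    {x y d : 𝕜} (hx : x ∈ s) (hyd : y + d ∈ s) (hd : 0 < d) (hxy : x < y) :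
    f (x + d) - f x < f (y + d) - f y := by
  have hxd : x + d ∈ s := hf.1.ordConnected.out hx hyd ⟨by linarith, by linarith⟩
  have hy : y ∈ s := hf.1.ordConnected.out hx hyd ⟨hxy.le, by linarith⟩
  -- slope on [x, x + d] < slope on [x, y + d] < slope on [y, y + d]
  have hleft := hf.secant_strict_mono hx hxd hyd (by linarith) (by linarith)
    (add_lt_add_left hxy d)
  have hright := hf.secant_strict_mono hyd hx hy (by linarith) (by linarith) hxy
  rw [add_sub_cancel_left] at hleft
  rw [← neg_div_neg_eq, neg_sub, neg_sub, ← neg_div_neg_eq (f y - _), neg_sub, neg_sub,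
    add_sub_cancel_left] at hright
  exact (div_lt_div_iff_of_pos_right hd).1 (hleft.trans hright)

theorem Real.strictConvexOn_mul_logb {b : ℝ} (hb : 1 < b) :
    StrictConvexOn ℝ (Set.Ici 0) fun x => x * Real.logb b x := by
  refine ⟨convex_Ici 0, fun x hx y hy hxy s t hs ht hst => ?_⟩
  have key := Real.strictConvexOn_mul_log.2 hx hy hxy hs ht hst
  simp only [smul_eq_mul, Real.logb, ← mul_div_assoc, ← add_div] at key ⊢
  exact div_lt_div_of_pos_right key (Real.log_pos hb)

theorem Fintype.sum_sub_sum_eq_of_eq_off_pair {ι M : Type*} [Fintype ι] [DecidableEq ι]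
    [AddCommGroup M] {F G : ι → M} {x y : ι} (hxy : x ≠ y)
    (h : ∀ v, v ≠ x → v ≠ y → F v = G v) :
    ∑ v, F v - ∑ v, G v = (F x - G x) + (F y - G y) := by
  rw [← sum_sub_distrib, ← sum_pair (f := fun v => F v - G v) hxy]
  refine (Finset.sum_subset (subset_univ _) fun v _ hv => ?_).symm
  simp only [mem_insert, mem_singleton, not_or] at hv
  rw [h v hv.1 hv.2, sub_self]

lemma hdeg_insert {V : Type*} [DecidableEq V] {A : Finset (Finset V)} {f : Finset V}
    (hf : f ∉ A) (v : V) :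
    hdeg (insert f A) v = hdeg A v + if v ∈ f then 1 else 0 := by
  unfold hdeg
  rw [filter_insert]
  split_ifs
  · exact card_insert_of_notMem fun hm => hf (mem_filter.mp hm).1
  · rfl

lemma hdeg_erase_union_singleton {V : Type*} [DecidableEq V] {E : Finset (Finset V)}
    {e e' : Finset V} (he : e ∈ E) (he' : e' ∉ E) (v : V) :
    hdeg (E.erase e ∪ {e'}) v + (if v ∈ e then 1 else 0) =
      hdeg E v + if v ∈ e' then 1 else 0 := by
  have hE := hdeg_insert (notMem_erase e E) v
  rw [insert_erase he] at hE
  rw [union_comm, ← insert_eq, hdeg_insert fun h => he' (mem_of_mem_erase h), hE]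
  ring

theorem stmt_3_general {V : Type*} [Fintype V] [DecidableEq V]
    (E : Finset (Finset V))
    (vi vj : V) (hdij : hdeg E vj ≤ hdeg E vi)
    (e : Finset V) (he : e ∈ E) (hvj : vj ∈ e) (hvi : vi ∉ e)
    (hnew : insert vi (e.erase vj) ∉ E) :
    hval E < hval ((E.erase e) ∪ {insert vi (e.erase vj)}) := by
  set e' := insert vi (e.erase vj)
  set E' := E.erase e ∪ {e'}
  have hne : vi ≠ vj := fun h => hvi (h ▸ hvj)
  have hmove (v : V) :
      hdeg E' v + (if v ∈ e then 1 else 0) = hdeg E v + if v ∈ e' then 1 else 0 :=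
    hdeg_erase_union_singleton he hnew v
  have hrest (v : V) (hi : v ≠ vi) (hj : v ≠ vj) : hdeg E' v = hdeg E v := by
    simpa [e', hi, hj] using hmove v
  have hdeg_vi : hdeg E' vi = hdeg E vi + 1 := by simpa [e', hvi] using hmove vi
  have hdeg_vj : hdeg E vj = hdeg E' vj + 1 := by simpa [e', hvj, hne.symm] using (hmove vj).symm
  have hlt : (hdeg E' vj : ℝ) < hdeg E vi := by exact_mod_cast (by omega : hdeg E' vj < hdeg E vi)
  have hinc := (Real.strictConvexOn_mul_logb one_lt_two).sub_lt_sub_of_lt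
    (Set.mem_Ici.2 (Nat.cast_nonneg _)) (Set.mem_Ici.2 (by positivity)) one_pos hlt
  have hdiff := Fintype.sum_sub_sum_eq_of_eq_off_pair hne
    (F := fun v => (hdeg E' v : ℝ) * Real.logb 2 (hdeg E' v))
    (G := fun v => (hdeg E v : ℝ) * Real.logb 2 (hdeg E v))
    (fun v hi hj => by rw [hrest v hi hj])
  simp only [hdeg_vi, hdeg_vj, Nat.cast_add, Nat.cast_one] at hdiff
  unfold hval
  linarith

/-- Lemma 3 (hypergraph form): moving the edge `e` from `v_j` to `v_i`, where
`d(v_i) ≥ d(v_j)`, strictly increases `h`. -/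
theorem stmt_3 {V : Type*} [Fintype V] [DecidableEq V] (k : ℕ) (hk : 3 ≤ k)
    (E : Finset (Finset V)) (hunif : ∀ e ∈ E, e.card = k)
    (vi vj : V) (hdij : hdeg E vj ≤ hdeg E vi)
    (e : Finset V) (he : e ∈ E) (hvj : vj ∈ e) (hvi : vi ∉ e)
    (hnew : insert vi (e.erase vj) ∉ E) :
    hval E < hval ((E.erase e) ∪ {insert vi (e.erase vj)}) :=
  stmt_3_general E vi vj hdij e he hvj hvi hnew
end

section
/- Lemma 4(a): Let T be a k-uniform supertree on n vertices with m = (n−1)/(k−1) ≥ 2 edges, where k ≥ 3. Then h(T) = Σ_{v} d(v)·log₂ d(v) ≥ 2(m − 1)·log₂ 2 = 2(m − 1), and equality holds if and only if every vertex of T has degree at most 2. -/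
open Finset

/-- The hypergraph is connected: the simple graph on `V` in which `u` is adjacent
to `w` iff `u ≠ w` and some edge contains both is connected. -/
def hconn {V : Type*} (E : Finset (Finset V)) : Prop :=
  (SimpleGraph.fromRel (fun u w => ∃ e ∈ E, u ∈ e ∧ w ∈ e)).Connected

/-! The function `d ↦ d log₂ d` lies on or above the chord `d ↦ 2(d - 1)` through its values at
`d = 1, 2`, and at every integer `d ≥ 1` it touches that chord exactly when `d ≤ 2`. Summing over
the vertices of a supertree, which has no isolated vertex, turns the right-hand side into
`2(Σ d(v) - n) = 2(mk - n) = 2(m - 1)`. -/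

lemma two_mul_sub_one_lt_mul_logb_two {d : ℕ} (hd : 3 ≤ d) :
    2 * ((d : ℝ) - 1) < d * Real.logb 2 d := by
  rcases hd.eq_or_lt with rfl | hd4
  · have h16_lt_27 : Real.logb 2 (2 ^ 4) < Real.logb 2 (3 ^ 3) :=
      Real.logb_lt_logb (by norm_num) (by norm_num) (by norm_num)
    rw [Real.logb_pow, Real.logb_pow, Real.logb_self_eq_one (by norm_num)] at h16_lt_27
    push_cast at h16_lt_27 ⊢
    linarith
  · have hd4 : (4 : ℝ) ≤ d := by exact_mod_cast hd4
    have hlogb : 2 ≤ Real.logb 2 d := by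
      calc (2 : ℝ) = Real.logb 2 (2 ^ 2) := by
            rw [Real.logb_pow, Real.logb_self_eq_one (by norm_num)]; norm_num
        _ ≤ Real.logb 2 d :=
          (Real.logb_le_logb (by norm_num) (by norm_num) (by linarith)).2 (by linarith)
    nlinarith

lemma mul_logb_two_eq_two_mul_sub_one_iff {d : ℕ} (hd : 1 ≤ d) :
    d * Real.logb 2 d = 2 * ((d : ℝ) - 1) ↔ d ≤ 2 := by
  refine ⟨fun heq => ?_, fun hd2 => by interval_cases d <;> norm_num⟩
  by_contra! hd3
  exact (two_mul_sub_one_lt_mul_logb_two hd3).ne' heq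

lemma two_mul_sub_one_le_mul_logb_two {d : ℕ} (hd : 1 ≤ d) :
    2 * ((d : ℝ) - 1) ≤ d * Real.logb 2 d := by
  rcases le_or_gt d 2 with hd2 | hd3
  · exact ((mul_logb_two_eq_two_mul_sub_one_iff hd).2 hd2).ge
  · exact (two_mul_sub_one_lt_mul_logb_two hd3).le

lemma sum_hdeg_eq_sum_card {V : Type*} [Fintype V] [DecidableEq V] (E : Finset (Finset V)) :
    ∑ v, hdeg E v = ∑ e ∈ E, e.card := by
  simp only [hdeg, card_filter]
  rw [sum_comm]
  refine sum_congr rfl fun e _ => ?_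
  rw [sum_ite_mem, univ_inter, sum_const, smul_eq_mul, mul_one]

lemma sum_hdeg_sub_one_of_uniform {V : Type*} [Fintype V] [DecidableEq V]
    {E : Finset (Finset V)} {k : ℕ} (hunif : ∀ e ∈ E, e.card = k) :
    ∑ v, ((hdeg E v : ℝ) - 1) = E.card * k - Fintype.card V := by
  rw [sum_sub_distrib, ← Nat.cast_sum, sum_hdeg_eq_sum_card, sum_congr rfl hunif]
  simp

lemma nontrivial_of_uniform {V : Type*} [Fintype V] {E : Finset (Finset V)} {k : ℕ}
    (hunif : ∀ e ∈ E, e.card = k) (hE : 1 < E.card) :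
    Nontrivial V := by
  by_contra hV
  have hV : Fintype.card V ≤ 1 :=
    Fintype.card_le_one_iff_subsingleton.2 (not_nontrivial_iff_subsingleton.1 hV)
  have hsub : E ⊆ powersetCard k univ := fun e he =>
    mem_powersetCard.2 ⟨subset_univ e, hunif e he⟩
  have hchoose := (card_le_card hsub).trans_eq (by rw [card_powersetCard, card_univ])
  have := (hchoose.trans (Nat.choose_le_pow _ _)).trans (pow_le_one₀ (Nat.zero_le _) hV)
  omega

lemma one_le_hdeg_of_hconn {V : Type*} [DecidableEq V] [Nontrivial V] {E : Finset (Finset V)}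
    (hc : hconn E) (v : V) : 1 ≤ hdeg E v := by
  obtain ⟨w, -, ⟨e, he, hv, -⟩ | ⟨e, he, -, hv⟩⟩ := hc.preconnected.exists_adj_of_nontrivial v <;>
    exact card_pos.2 ⟨e, mem_filter.2 ⟨he, hv⟩⟩

theorem stmt_5_general {V : Type*} [Fintype V] [DecidableEq V] (k n m : ℕ)
    (E : Finset (Finset V)) (hunif : ∀ e ∈ E, e.card = k)
    (hn : Fintype.card V = n) (hm : E.card = m) (hm2 : 2 ≤ m)
    (hc : hconn E) (hacyc : m * (k - 1) = n - 1) :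
    2 * ((m : ℝ) - 1) ≤ hval E ∧
      (hval E = 2 * ((m : ℝ) - 1) ↔ ∀ v : V, hdeg E v ≤ 2) := by
  have := nontrivial_of_uniform hunif (by omega)
  have hdeg_pos (v : V) : 1 ≤ hdeg E v := one_le_hdeg_of_hconn hc v
  have hchord : ∑ v, 2 * ((hdeg E v : ℝ) - 1) = 2 * ((m : ℝ) - 1) := by
    have hn2 : 1 < n := hn ▸ Fintype.one_lt_card
    have hk1 : 1 ≤ k := Nat.pos_of_ne_zero (by rintro rfl; simp at hacyc; omega)
    have hcast : (m : ℝ) * ((k : ℝ) - 1) = n - 1 := by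
      rw [← Nat.cast_one, ← Nat.cast_sub hk1, ← Nat.cast_sub hn2.le, ← Nat.cast_mul, hacyc]
    rw [← mul_sum, sum_hdeg_sub_one_of_uniform hunif, hm, hn]
    linarith
  have hle (v : V) (_ : v ∈ univ) := two_mul_sub_one_le_mul_logb_two (hdeg_pos v)
  rw [hval, ← hchord, eq_comm, sum_eq_sum_iff_of_le hle]
  exact ⟨sum_le_sum hle, forall_congr' fun v => by
    rw [imp_iff_right (mem_univ v), eq_comm, mul_logb_two_eq_two_mul_sub_one_iff (hdeg_pos v)]⟩

/-- Lemma 4(a): for a k-uniform supertree with `m ≥ 2` edges, `h(T) ≥ 2(m−1)`,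
with equality iff every vertex has degree at most 2. -/
theorem stmt_5 {V : Type*} [Fintype V] [DecidableEq V] (k n m : ℕ) (hk : 3 ≤ k)
    (E : Finset (Finset V)) (hunif : ∀ e ∈ E, e.card = k)
    (hn : Fintype.card V = n) (hm : E.card = m) (hm2 : 2 ≤ m)
    (hc : hconn E) (hacyc : m * (k - 1) = n - 1) :
    2 * ((m : ℝ) - 1) ≤ hval E ∧
      (hval E = 2 * ((m : ℝ) - 1) ↔ ∀ v : V, hdeg E v ≤ 2) :=
  stmt_5_general k n m E hunif hn hm hm2 hc hacyc
end

section
/- Lemma 5(a): Let H be a unicyclic k-uniform hypergraph on n vertices with m = n/(k−1) ≥ 2 edges, where k ≥ 3. Then h(H) = Σ_{v} d(v)·log₂ d(v) ≥ 2m·log₂ 2 = 2m, and equality holds if and only if every vertex of H has degree at most 2. -/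
open Finset

lemma key_eq (d : ℕ) (hd : 1 ≤ d) (hd2 : d ≤ 2) :
    (d:ℝ) * Real.logb 2 d = 2*((d:ℝ)-1) := by
  interval_cases d
  · simp
  · norm_num [Real.logb_self_eq_one]

lemma key_strict (d : ℕ) (hd : 3 ≤ d) :
    2*((d:ℝ)-1) < (d:ℝ) * Real.logb 2 d := by
  rcases eq_or_lt_of_le hd with h3 | h4
  · subst h3
    push_cast
    have hlog : (4:ℝ) * Real.log 2 < 3 * Real.log 3 := by
      have : Real.log (2^4 : ℝ) < Real.log (3^3 : ℝ) := by
        apply Real.log_lt_log (by norm_num) (by norm_num)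
      rwa [Real.log_pow, Real.log_pow] at this
      
    have h2 : (0:ℝ) < Real.log 2 := Real.log_pos (by norm_num)
    rw [Real.logb, show (2:ℝ)*((3:ℝ)-1) = 4 by norm_num,
      show (3:ℝ)*(Real.log 3 / Real.log 2) = (3*Real.log 3)/Real.log 2 by ring,
      lt_div_iff₀ h2]
    linarith
  · have hd4 : (4:ℕ) ≤ d := h4
    have hlb : (2:ℝ) ≤ Real.logb 2 d := by
      have hle : Real.logb 2 (4:ℝ) ≤ Real.logb 2 d :=
        Real.logb_le_logb_of_le (b := 2) (by norm_num) (by norm_num) (by exact_mod_cast hd4)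
      have h4' : Real.logb 2 (4:ℝ) = 2 := by
        rw [show (4:ℝ) = 2^2 by norm_num, Real.logb_pow,
          Real.logb_self_eq_one (by norm_num)]
        norm_num
      linarith
    have hdpos : (3:ℝ) ≤ (d:ℝ) := by exact_mod_cast hd
    nlinarith

lemma key_le (d : ℕ) (hd : 1 ≤ d) :
    2*((d:ℝ)-1) ≤ (d:ℝ) * Real.logb 2 d := by
  rcases le_or_gt d 2 with h | h
  · exact (key_eq d hd h).ge
  · exact (key_strict d h).le

/-- Lemma 5(a): for a unicyclic k-uniform hypergraph with `m ≥ 2` edges,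
`h(H) ≥ 2m`, with equality iff every vertex has degree at most 2. -/
theorem stmt_7 {V : Type*} [Fintype V] [DecidableEq V] (k n m : ℕ) (hk : 3 ≤ k)
    (E : Finset (Finset V)) (hunif : ∀ e ∈ E, e.card = k)
    (hn : Fintype.card V = n) (hm : E.card = m) (hm2 : 2 ≤ m)
    (hc : hconn E) (huni : m * (k - 1) = n) :
    2 * (m : ℝ) ≤ hval E ∧
      (hval E = 2 * (m : ℝ) ↔ ∀ v : V, hdeg E v ≤ 2) := by
  -- degree sum
  have hsum : ∑ v : V, hdeg E v = m * k := by
    have h1 : ∑ v : V, hdeg E v = ∑ e ∈ E, ∑ v : V, (if v ∈ e then 1 else 0) := by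
      rw [Finset.sum_comm]
      simp only [hdeg, Finset.card_filter]
    rw [h1]
    have h2 : ∀ e ∈ E, (∑ v : V, (if v ∈ e then 1 else 0)) = k := by
      intro e he
      rw [← Finset.card_filter]
      rw [Finset.filter_univ_mem]
      exact hunif e he
    rw [Finset.sum_congr rfl h2, Finset.sum_const, hm, smul_eq_mul]
  -- every vertex has degree ≥ 1
  have hcard2 : 1 < Fintype.card V := by
    rw [hn, ← huni]
    have : 2 ≤ k - 1 := by omega
    calc 1 < 2 * 2 := by norm_num
    _ ≤ m * (k-1) := Nat.mul_le_mul hm2 this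
  have hdegpos : ∀ v : V, 1 ≤ hdeg E v := by
    intro v
    by_contra h
    push_neg at h
    have hzero : ∀ e ∈ E, v ∉ e := by
      intro e he hve
      have : 0 < hdeg E v := Finset.card_pos.mpr ⟨e, Finset.mem_filter.mpr ⟨he, hve⟩⟩
      omega
    obtain ⟨u, hu⟩ := Fintype.exists_ne_of_one_lt_card hcard2 v
    obtain ⟨w⟩ := hc.preconnected v u
    cases w with
    | nil => exact hu rfl
    | cons hadj p =>
      rw [SimpleGraph.fromRel_adj] at hadj
      obtain ⟨-, h1 | h1⟩ := hadj <;>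
        obtain ⟨e, he, hve, hwe⟩ := h1
      · exact hzero e he hve
      · exact hzero e he hwe
  -- the lower bound sum
  have hnk : (n:ℝ) = (m:ℝ) * ((k:ℝ) - 1) := by
    rw [← huni]
    have : 1 ≤ k := by omega
    push_cast [this]
    ring
  have hlow : ∑ v : V, 2*((hdeg E v : ℝ)-1) = 2 * (m:ℝ) := by
    have hcast : ∑ v : V, (hdeg E v : ℝ) = (m:ℝ) * (k:ℝ) := by
      rw [← Nat.cast_sum, hsum]; push_cast; ring
    rw [Finset.sum_congr rfl (fun v _ => by ring :
      ∀ v ∈ Finset.univ, 2*((hdeg E v : ℝ)-1) = 2*(hdeg E v : ℝ) - 2)]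
    rw [Finset.sum_sub_distrib, ← Finset.mul_sum, hcast, Finset.sum_const,
      Finset.card_univ, hn, nsmul_eq_mul, hnk]
    ring
  -- main inequality
  have hterm : ∀ v : V, 2*((hdeg E v : ℝ)-1) ≤ (hdeg E v:ℝ) * Real.logb 2 (hdeg E v) :=
    fun v => key_le _ (hdegpos v)
  have hle : 2 * (m:ℝ) ≤ hval E := by
    rw [← hlow]
    exact Finset.sum_le_sum (fun v _ => hterm v)
  refine ⟨hle, ?_, ?_⟩
  · intro heq v
    by_contra h
    push_neg at h
    have hstrict : ∑ v : V, 2*((hdeg E v : ℝ)-1) < hval E := by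
      apply Finset.sum_lt_sum (fun v _ => hterm v)
      exact ⟨v, Finset.mem_univ v, key_strict _ h⟩
    rw [hlow, heq] at hstrict
    exact lt_irrefl _ hstrict
  · intro hall
    rw [← hlow]
    exact Finset.sum_congr rfl (fun v _ => key_eq _ (hdegpos v) (hall v))
end

section
/- Lemma 5(b): Let H be a unicyclic k-uniform hypergraph on n vertices with m = n/(k−1) ≥ 2 edges, where k ≥ 3. Then h(H) = Σ_{v} d(v)·log₂ d(v) ≤ m·log₂ m + 2·log₂ 2 = m·log₂ m + 2, and equality holds if and only if there exist distinct vertices u and w with d(u) = m, d(w) = 2, and every other vertex of degree 1 (equivalently, H is the hypergraph H^{II} obtained from the hyperstar by letting two of its edges share one additional common vertex). -/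
open Finset

/-- Slope comparison for the strictly convex function `x ↦ x log x`. -/
lemma aux_slope4 {x y z w : ℝ} (hx : 0 ≤ x) (hxy : x < y) (hyz : y ≤ z) (hzw : z < w) :
    (y * Real.log y - x * Real.log x) / (y - x)
      < (w * Real.log w - z * Real.log z) / (w - z) := by
  have hC := Real.strictConvexOn_mul_log
  rcases eq_or_lt_of_le hyz with rfl | hyz'
  · exact hC.slope_strict_mono_adjacent (Set.mem_Ici.2 hx)
      (Set.mem_Ici.2 (by linarith)) hxy hzw
  · have h1 := hC.slope_strict_mono_adjacent (Set.mem_Ici.2 hx)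
      (Set.mem_Ici.2 (by linarith : (0:ℝ) ≤ z)) hxy hyz'
    have h2 := hC.slope_strict_mono_adjacent (Set.mem_Ici.2 (by linarith : (0:ℝ) ≤ y))
      (Set.mem_Ici.2 (by linarith : (0:ℝ) ≤ w)) hyz' hzw
    linarith

/-- Smoothing step: moving a unit of degree from `b` to `a ≥ b` strictly increases
`d log₂ d`-sums. -/
lemma aux_step_ineq (a b : ℕ) (hb : 2 ≤ b) (hba : b ≤ a) :
    (a : ℝ) * Real.logb 2 a + (b : ℝ) * Real.logb 2 b
      < ((a + 1 : ℕ) : ℝ) * Real.logb 2 ((a + 1 : ℕ)) +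
        ((b - 1 : ℕ) : ℝ) * Real.logb 2 ((b - 1 : ℕ)) := by
  have hb1 : ((b - 1 : ℕ) : ℝ) = (b : ℝ) - 1 := by
    push_cast [Nat.cast_sub (by omega : 1 ≤ b)]; ring
  have hba' : (b : ℝ) ≤ a := by exact_mod_cast hba
  have hb2 : (2 : ℝ) ≤ (b : ℝ) := by exact_mod_cast hb
  have key := aux_slope4 (x := (b:ℝ) - 1) (y := b) (z := a) (w := (a:ℝ) + 1)
    (by linarith) (by linarith) (by linarith) (by linarith)
  rw [show (b:ℝ) - ((b:ℝ)-1) = 1 by ring, show (a:ℝ) + 1 - a = 1 by ring,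
    div_one, div_one] at key
  simp only [Real.logb, hb1]
  push_cast
  have hlog2 : (0:ℝ) < Real.log 2 := Real.log_pos (by norm_num)
  rw [show ∀ p q r s : ℝ, p * (q / Real.log 2) + r * (s / Real.log 2)
      = (p*q + r*s)/Real.log 2 by intros; ring,
    show ∀ p q r s : ℝ, (p) * (q / Real.log 2) + (r) * (s / Real.log 2)
      = (p*q + r*s)/Real.log 2 by intros; ring]
  rw [div_lt_div_iff_of_pos_right hlog2]
  linarith [key]

/-- The value of the extremal configuration. -/
lemma aux_special_val {V : Type*} [Fintype V] [DecidableEq V] (m : ℕ) (d : V → ℕ)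
    (u w : V) (huw : u ≠ w) (hu : d u = m) (hw : d w = 2)
    (hrest : ∀ v : V, v ≠ u → v ≠ w → d v = 1) :
    ∑ v : V, (d v : ℝ) * Real.logb 2 (d v) = (m : ℝ) * Real.logb 2 m + 2 := by
  have hsub : ({u, w} : Finset V) ⊆ univ := subset_univ _
  rw [← Finset.sum_sdiff hsub]
  have h1 : ∑ v ∈ univ \ {u, w}, (d v : ℝ) * Real.logb 2 (d v) = 0 := by
    apply Finset.sum_eq_zero
    intro v hv
    simp only [mem_sdiff, mem_insert, mem_singleton] at hv
    rw [hrest v (fun h => hv.2 (Or.inl h)) (fun h => hv.2 (Or.inr h))]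
    simp
  rw [h1, zero_add, Finset.sum_pair huw, hu, hw]
  norm_num

/-- Main combinatorial lemma, by smoothing induction. -/
lemma aux_key {V : Type*} [Fintype V] [DecidableEq V] (m : ℕ) :
    ∀ t : ℕ, ∀ d : V → ℕ, (∀ v, 1 ≤ d v) → (∀ v, d v ≤ m) →
    (∑ v : V, d v = m + Fintype.card V) → (∃ u, m ≤ d u + t) →
    (∑ v : V, (d v : ℝ) * Real.logb 2 (d v) ≤ (m : ℝ) * Real.logb 2 m + 2) ∧
    ((∑ v : V, (d v : ℝ) * Real.logb 2 (d v)) = (m : ℝ) * Real.logb 2 m + 2 →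
      ∃ u w : V, u ≠ w ∧ d u = m ∧ d w = 2 ∧ ∀ v : V, v ≠ u → v ≠ w → d v = 1) := by
  intro t
  induction t with
  | zero =>
    intro d hd1 hdm hsum ⟨u0, hu0⟩
    have hu : d u0 = m := le_antisymm (hdm u0) (by omega)
    have hspec : ∃ w : V, u0 ≠ w ∧ d w = 2 ∧ ∀ v : V, v ≠ u0 → v ≠ w → d v = 1 := by
      set s := univ.erase u0 with hs
      have hcard : s.card = Fintype.card V - 1 := by
        rw [hs, card_erase_of_mem (mem_univ u0), Finset.card_univ]
      have hsum_s : d u0 + ∑ v ∈ s, d v = m + Fintype.card V := by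
        rw [hs, Finset.add_sum_erase _ _ (mem_univ u0)]; exact hsum
      have hVpos : 1 ≤ Fintype.card V := Fintype.card_pos_iff.2 ⟨u0⟩
      have hsum_s' : ∑ v ∈ s, d v = Fintype.card V := by omega
      have hsum_e : ∑ v ∈ s, (d v - 1) + s.card = Fintype.card V := by
        have : ∑ v ∈ s, d v = ∑ v ∈ s, ((d v - 1) + 1) := by
          apply Finset.sum_congr rfl; intro v _; have := hd1 v; omega
        rw [this, Finset.sum_add_distrib, Finset.sum_const, smul_eq_mul, mul_one] at hsum_s'
        omega
      have hsum_e1 : ∑ v ∈ s, (d v - 1) = 1 := by omega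
      have hex : ∃ w ∈ s, 1 ≤ d w - 1 := by
        by_contra h
        push_neg at h
        have : ∑ v ∈ s, (d v - 1) = 0 := Finset.sum_eq_zero (fun v hv => by have := h v hv; omega)
        omega
      obtain ⟨w, hws, hw1⟩ := hex
      have hwu : u0 ≠ w := fun h => (Finset.mem_erase.1 hws).1 h.symm
      have hrest : ∀ v : V, v ≠ u0 → v ≠ w → d v = 1 := by
        intro v hvu hvw
        have hvs : v ∈ s.erase w := Finset.mem_erase.2 ⟨hvw, Finset.mem_erase.2 ⟨hvu, mem_univ v⟩⟩
        have h1 : (fun x => d x - 1) w + ∑ x ∈ s.erase w, (d x - 1) = 1 := by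
          rw [Finset.add_sum_erase s (fun x => d x - 1) hws]; exact hsum_e1
        have h2 : d v - 1 ≤ ∑ x ∈ s.erase w, (d x - 1) :=
          Finset.single_le_sum (f := fun x => d x - 1) (fun _ _ => Nat.zero_le _) hvs
        simp only [] at h1
        have := hd1 v
        omega
      have hw2 : d w = 2 := by
        have h1 : (fun x => d x - 1) w + ∑ x ∈ s.erase w, (d x - 1) = 1 := by
          rw [Finset.add_sum_erase s (fun x => d x - 1) hws]; exact hsum_e1
        simp only [] at h1
        have := hd1 w; omega
      exact ⟨w, hwu, hw2, hrest⟩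
    obtain ⟨w, hwu, hw2, hrest⟩ := hspec
    have hval := aux_special_val m d u0 w hwu hu hw2 hrest
    exact ⟨le_of_eq hval, fun _ => ⟨u0, w, hwu, hu, hw2, hrest⟩⟩
  | succ t ih =>
    intro d hd1 hdm hsum ⟨u0, hu0⟩
    by_cases hmax : ∃ u, d u = m
    · obtain ⟨u, hu⟩ := hmax
      exact ih d hd1 hdm hsum ⟨u, by omega⟩
    · push_neg at hmax
      obtain ⟨u, -, hmaxu⟩ := Finset.exists_max_image univ d ⟨u0, mem_univ u0⟩
      have humax : ∀ v : V, d v ≤ d u := fun v => hmaxu v (mem_univ v)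
      have hum : d u < m := lt_of_le_of_ne (hdm u) (hmax u)
      have hVpos : 1 ≤ Fintype.card V := Fintype.card_pos_iff.2 ⟨u⟩
      have hex : ∃ w : V, w ≠ u ∧ 2 ≤ d w := by
        by_contra h
        push_neg at h
        have hsum2 : d u + ∑ v ∈ univ.erase u, d v = m + Fintype.card V := by
          rw [Finset.add_sum_erase _ _ (mem_univ u)]; exact hsum
        have : ∑ v ∈ univ.erase u, d v = (univ.erase u).card := by
          rw [Finset.card_eq_sum_ones]
          apply Finset.sum_congr rfl
          intro v hv
          have hvu : v ≠ u := (Finset.mem_erase.1 hv).1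
          have := h v hvu; have := hd1 v; omega
        rw [this, card_erase_of_mem (mem_univ u), Finset.card_univ] at hsum2
        omega
      obtain ⟨w, hwu, hw2⟩ := hex
      set d' : V → ℕ := Function.update (Function.update d u (d u + 1)) w (d w - 1) with hd'
      have hd'u : d' u = d u + 1 := by
        rw [hd', Function.update_of_ne (Ne.symm hwu), Function.update_self]
      have hd'w : d' w = d w - 1 := by rw [hd', Function.update_self]
      have hd'v : ∀ v : V, v ≠ u → v ≠ w → d' v = d v := by
        intro v hvu hvw
        rw [hd', Function.update_of_ne hvw, Function.update_of_ne hvu]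
      have split : ∀ (M : Type) [AddCommMonoid M] (g : V → M),
          ∑ v : V, g v = g u + (g w + ∑ v ∈ (univ.erase u).erase w, g v) := by
        intro M _ g
        rw [Finset.add_sum_erase _ _ (Finset.mem_erase.2 ⟨hwu, mem_univ w⟩),
          Finset.add_sum_erase _ _ (mem_univ u)]
      have hrest_eq : ∑ v ∈ (univ.erase u).erase w, d' v = ∑ v ∈ (univ.erase u).erase w, d v := by
        apply Finset.sum_congr rfl
        intro v hv
        exact hd'v v (Finset.mem_erase.1 (Finset.mem_erase.1 hv).2).1 (Finset.mem_erase.1 hv).1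
      have hsum' : ∑ v : V, d' v = m + Fintype.card V := by
        rw [split ℕ d', hd'u, hd'w, hrest_eq]
        rw [split ℕ d] at hsum
        omega
      have hd1' : ∀ v, 1 ≤ d' v := by
        intro v
        by_cases h1 : v = w
        · rw [h1, hd'w]; omega
        by_cases h2 : v = u
        · rw [h2, hd'u]; omega
        · rw [hd'v v h2 h1]; exact hd1 v
      have hdm' : ∀ v, d' v ≤ m := by
        intro v
        by_cases h1 : v = w
        · rw [h1, hd'w]; have := hdm w; omega
        by_cases h2 : v = u
        · rw [h2, hd'u]; omega
        · rw [hd'v v h2 h1]; exact hdm v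
      have hwit : ∃ v, m ≤ d' v + t := ⟨u, by have := humax u0; omega⟩
      obtain ⟨ihle, -⟩ := ih d' hd1' hdm' hsum' hwit
      have hlt : ∑ v : V, (d v : ℝ) * Real.logb 2 (d v)
          < ∑ v : V, (d' v : ℝ) * Real.logb 2 (d' v) := by
        rw [split ℝ (fun v => (d v : ℝ) * Real.logb 2 (d v)),
          split ℝ (fun v => (d' v : ℝ) * Real.logb 2 (d' v))]
        have hrest_eqR : ∑ v ∈ (univ.erase u).erase w, (d' v : ℝ) * Real.logb 2 (d' v)
            = ∑ v ∈ (univ.erase u).erase w, (d v : ℝ) * Real.logb 2 (d v) := by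
          apply Finset.sum_congr rfl
          intro v hv
          rw [hd'v v (Finset.mem_erase.1 (Finset.mem_erase.1 hv).2).1 (Finset.mem_erase.1 hv).1]
        rw [hrest_eqR, hd'u, hd'w]
        have := aux_step_ineq (d u) (d w) hw2 (humax w)
        push_cast at this ⊢
        linarith
      refine ⟨le_of_lt (lt_of_lt_of_le hlt ihle), fun heq => absurd heq (ne_of_lt ?_)⟩
      exact lt_of_lt_of_le hlt ihle

/-- Lemma 5(b): for a unicyclic k-uniform hypergraph with `m ≥ 2` edges,
`h(H) ≤ m·log₂ m + 2`, with equality iff there are distinct vertices `u, w` with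
`d(u) = m`, `d(w) = 2` and every other vertex of degree 1. -/
theorem stmt_8 {V : Type*} [Fintype V] [DecidableEq V] (k n m : ℕ) (hk : 3 ≤ k)
    (E : Finset (Finset V)) (hunif : ∀ e ∈ E, e.card = k)
    (hn : Fintype.card V = n) (hm : E.card = m) (hm2 : 2 ≤ m)
    (hc : hconn E) (huni : m * (k - 1) = n) :
    hval E ≤ (m : ℝ) * Real.logb 2 m + 2 ∧
      (hval E = (m : ℝ) * Real.logb 2 m + 2 ↔
        ∃ u w : V, u ≠ w ∧ hdeg E u = m ∧ hdeg E w = 2 ∧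
          ∀ v : V, v ≠ u → v ≠ w → hdeg E v = 1) := by
  have hcardV : 2 ≤ Fintype.card V := by
    have h4 : 2 * 2 ≤ m * (k - 1) := Nat.mul_le_mul hm2 (by omega)
    omega
  -- every vertex has degree at least 1
  have hd1 : ∀ v : V, 1 ≤ hdeg E v := by
    intro v
    obtain ⟨w, hw⟩ := Fintype.exists_ne_of_one_lt_card (by omega) v
    obtain ⟨p⟩ := hc.preconnected v w
    cases p with
    | nil => exact absurd rfl hw
    | cons h q =>
      rw [SimpleGraph.fromRel_adj] at h
      have hE : ∃ e ∈ E, v ∈ e := by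
        rcases h.2 with ⟨e, he, hv, -⟩ | ⟨e, he, -, hv⟩ <;> exact ⟨e, he, hv⟩
      obtain ⟨e, he, hv⟩ := hE
      exact Finset.card_pos.2 ⟨e, Finset.mem_filter.2 ⟨he, hv⟩⟩
  -- every vertex has degree at most m
  have hdm : ∀ v : V, hdeg E v ≤ m := fun v => hm ▸ Finset.card_filter_le E _
  -- degree sum
  have hdsum : ∑ v : V, hdeg E v = m + Fintype.card V := by
    have h1 : ∑ v : V, hdeg E v = m * k := by
      unfold hdeg
      simp only [Finset.card_filter]
      rw [Finset.sum_comm]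
      have : ∀ e ∈ E, (∑ v : V, if v ∈ e then 1 else 0) = k := by
        intro e he
        rw [Finset.sum_ite_mem, Finset.univ_inter, Finset.sum_const, smul_eq_mul, mul_one]
        exact hunif e he
      rw [Finset.sum_congr rfl this, Finset.sum_const, smul_eq_mul, hm]
    have hk1 : k - 1 + 1 = k := by omega
    have h2 : m * k = m + m * (k - 1) := by
      conv_lhs => rw [← hk1]
      rw [Nat.mul_add, Nat.mul_one, Nat.add_comm]
    rw [h1, h2, huni, hn]
  have hne : Nonempty V := Fintype.card_pos_iff.1 (by omega)
  obtain ⟨v0⟩ := hne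
  obtain ⟨hle, heq⟩ := aux_key m m (hdeg E) hd1 hdm hdsum ⟨v0, by omega⟩
  refine ⟨hle, ⟨heq, ?_⟩⟩
  rintro ⟨u, w, huw, hu, hw, hrest⟩
  exact aux_special_val m (hdeg E) u w huw hu hw hrest
end

section
/- Lemma 6(a): Let H be a bicyclic k-uniform hypergraph on n vertices with m = (n+1)/(k−1) ≥ 2 edges, where k ≥ 3. Then h(H) = Σ_{v} d(v)·log₂ d(v) ≥ 2(m + 1)·log₂ 2 = 2(m + 1), and equality holds if and only if every vertex of H has degree at most 2. -/
open Finset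

lemma ptwise (d : ℕ) (hd : 1 ≤ d) :
    2*((d:ℝ)-1) ≤ (d:ℝ) * Real.logb 2 d ∧
    ((d:ℝ) * Real.logb 2 d = 2*((d:ℝ)-1) ↔ d ≤ 2) := by
  have hlog2 : Real.logb 2 2 = 1 := Real.logb_self_eq_one (by norm_num)
  rcases Nat.lt_or_ge d 3 with h3 | h3
  · interval_cases d
    · simp
    · rw [show ((2:ℕ):ℝ) = 2 by norm_num, hlog2]; norm_num
  · have hlt : 2*((d:ℝ)-1) < (d:ℝ) * Real.logb 2 d := by
      rcases Nat.lt_or_ge d 4 with h4 | h4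
      · have hd3 : d = 3 := by omega
        subst hd3
        have h1 : Real.log 16 < Real.log 27 := Real.log_lt_log (by norm_num) (by norm_num)
        rw [show (16:ℝ) = 2^4 by norm_num, show (27:ℝ) = 3^3 by norm_num,
          Real.log_pow, Real.log_pow] at h1
        have hl2 : (0:ℝ) < Real.log 2 := Real.log_pos (by norm_num)
        push_cast at h1 ⊢
        rw [Real.logb, show (3:ℝ)*(Real.log 3/Real.log 2) = 3*Real.log 3/Real.log 2 by ring,
          lt_div_iff₀ hl2]
        linarith
      · have h4' : (4:ℝ) ≤ (d:ℝ) := by exact_mod_cast h4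
        have hlb : (2:ℝ) ≤ Real.logb 2 d := by
          have : Real.logb 2 4 ≤ Real.logb 2 d :=
            (Real.logb_le_logb (by norm_num) (by norm_num) (by linarith)).2 h4'
          rw [show (4:ℝ) = 2^2 by norm_num, Real.logb_pow, hlog2] at this
          push_cast at this; linarith
        nlinarith
    refine ⟨le_of_lt hlt, ?_⟩
    constructor
    · intro h; exfalso; linarith
    · intro h; omega

lemma degpos {V : Type*} [Fintype V] [DecidableEq V] (E : Finset (Finset V))
    (hc : hconn E) (hcard : 1 < Fintype.card V) (v : V) : 1 ≤ hdeg E v := by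
  by_contra h
  have h0 : ∀ e ∈ E, v ∉ e := by
    intro e he hv
    have : e ∈ E.filter (fun e => v ∈ e) := mem_filter.2 ⟨he, hv⟩
    exact h (card_pos.2 ⟨e, this⟩)
  obtain ⟨u, hu⟩ := Fintype.exists_ne_of_one_lt_card hcard v
  obtain ⟨w⟩ := hc.preconnected v u
  cases w with
  | nil => exact hu rfl
  | cons hadj p =>
    rw [SimpleGraph.fromRel_adj] at hadj
    obtain ⟨-, h1 | h1⟩ := hadj <;> obtain ⟨e, he, h2, h3⟩ := h1
    · exact h0 e he h2
    · exact h0 e he h3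

lemma degsum {V : Type*} [Fintype V] [DecidableEq V] (E : Finset (Finset V)) (k : ℕ)
    (hunif : ∀ e ∈ E, e.card = k) : ∑ v : V, hdeg E v = E.card * k := by
  have : ∀ v : V, hdeg E v = ∑ e ∈ E, if v ∈ e then 1 else 0 := by
    intro v; rw [hdeg, card_filter]
  simp_rw [this]
  rw [Finset.sum_comm]
  have h2 : ∀ e ∈ E, (∑ v : V, if v ∈ e then 1 else 0) = k := by
    intro e he
    rw [← card_filter, Finset.filter_univ_mem, hunif e he]
  rw [Finset.sum_congr rfl h2, Finset.sum_const, smul_eq_mul]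

/-- Lemma 6(a): for a bicyclic k-uniform hypergraph with `m ≥ 2` edges,
`h(H) ≥ 2(m+1)`, with equality iff every vertex has degree at most 2. -/
theorem stmt_9 {V : Type*} [Fintype V] [DecidableEq V] (k n m : ℕ) (hk : 3 ≤ k)
    (E : Finset (Finset V)) (hunif : ∀ e ∈ E, e.card = k)
    (hn : Fintype.card V = n) (hm : E.card = m) (hm2 : 2 ≤ m)
    (hc : hconn E) (hbi : m * (k - 1) = n + 1) :
    2 * ((m : ℝ) + 1) ≤ hval E ∧
      (hval E = 2 * ((m : ℝ) + 1) ↔ ∀ v : V, hdeg E v ≤ 2) := by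
  have hmk : m * k = n + 1 + m := by
    obtain ⟨k', rfl⟩ : ∃ k', k = k' + 1 := ⟨k - 1, by omega⟩
    simp only [Nat.add_sub_cancel] at hbi
    rw [Nat.mul_succ, hbi]
  have hcard2 : 1 < Fintype.card V := by
    have : 2 * 2 ≤ m * (k - 1) := Nat.mul_le_mul hm2 (by omega)
    omega
  have hdpos : ∀ v : V, 1 ≤ hdeg E v := degpos E hc hcard2
  have hsum : ∑ v : V, hdeg E v = n + 1 + m := by
    rw [degsum E k hunif, hm, hmk]
  have hsumR : ∑ v : V, ((hdeg E v : ℝ)) = (n : ℝ) + 1 + m := by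
    exact_mod_cast congrArg (Nat.cast : ℕ → ℝ) hsum
  have hgsum : ∑ v : V, 2*((hdeg E v : ℝ) - 1) = 2*((m:ℝ)+1) := by
    have h1 : ∑ v : V, ((hdeg E v : ℝ) - 1) = (m:ℝ) + 1 := by
      rw [Finset.sum_sub_distrib, hsumR, Finset.sum_const, card_univ, hn]
      push_cast; ring
    rw [← Finset.mul_sum, h1]
  have key : ∀ v ∈ (univ : Finset V),
      2*((hdeg E v : ℝ)-1) ≤ (hdeg E v : ℝ) * Real.logb 2 (hdeg E v) :=
    fun v _ => (ptwise _ (hdpos v)).1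
  constructor
  · rw [hval, ← hgsum]
    exact Finset.sum_le_sum key
  · constructor
    · intro h v
      have heq := (Finset.sum_eq_sum_iff_of_le key).1 (by rw [hgsum, ← h]; rfl)
      exact (ptwise _ (hdpos v)).2.1 (heq v (mem_univ v)).symm
    · intro h
      rw [hval, ← hgsum]
      exact Finset.sum_congr rfl fun v _ => (ptwise _ (hdpos v)).2.2 (h v)
end

section
/- Theorem 1: Let T be a k-uniform supertree on n vertices with m = (n−1)/(k−1) ≥ 2 edges, where k ≥ 3. Then log₂(km) − (log₂ m)/k ≤ I_d^1(T) ≤ log₂(km) − 2(m−1)·log₂ 2/(km) = log₂(km) − 2(m−1)/(km). The first equality holds if and only if some vertex of T has degree m (i.e., T is the hyperstar S^k_{m+1}), and the second equality holds if and only if every vertex of T has degree at most 2. -/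
open Finset

/-- First-order degree-based graph entropy
`I_d^1(H) = log₂(km) − (1/(km))·Σ_v d(v)·log₂ d(v)`. -/
noncomputable def entropy1 {V : Type*} [Fintype V] [DecidableEq V]
    (k m : ℕ) (E : Finset (Finset V)) : ℝ :=
  Real.logb 2 ((k : ℝ) * m) - (1 / ((k : ℝ) * m)) * hval E

/-!
With `d_v = hdeg E v` we have `d_v ≥ 1` and `∑ (d_v - 1) = km - n = m - 1`. Write
`d log₂ d = (d - 1) s(d)` with `s(x) = x log₂ x / (x - 1)`, which is increasing on `(1, ∞)` by
strict convexity of `x log x`. For `1 ≤ d ≤ m` this gives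
`2 (d - 1) = (d - 1) s(2) ≤ d log₂ d ≤ (d - 1) s(m)`, with equality iff `d ≤ 2`, resp.
`d ∈ {1, m}`. Summing over the vertices, `2 (m - 1) ≤ ∑ d_v log₂ d_v ≤ m log₂ m`, and the entropy
is `log₂ (km) - ∑ d_v log₂ d_v / (km)`.
-/

open Real

-- `x log₂ x` vanishes at `1`, so this is the slope of its chord from `1`.
noncomputable def mulLogbSlope (x : ℝ) : ℝ := x * logb 2 x / (x - 1)

lemma mul_logb_eq_sub_one_mul_mulLogbSlope (x : ℝ) :
    x * logb 2 x = (x - 1) * mulLogbSlope x := by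
  rcases eq_or_ne x 1 with rfl | hx
  · simp
  · rw [mulLogbSlope, mul_div_cancel₀ _ (sub_ne_zero.2 hx)]

lemma mulLogbSlope_two : mulLogbSlope 2 = 2 := by
  norm_num [mulLogbSlope]

lemma strictMonoOn_mulLogbSlope : StrictMonoOn mulLogbSlope (Set.Ioi 1) := by
  intro x hx y hy hxy
  have hsec := strictConvexOn_mul_log.secant_strict_mono (a := 1) (Set.mem_Ici.2 zero_le_one)
    (Set.mem_Ici.2 (zero_le_one.trans hx.le)) (Set.mem_Ici.2 (zero_le_one.trans hy.le))
    hx.ne' hy.ne' hxy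
  simp only [log_one, mul_zero, sub_zero] at hsec
  simp only [mulLogbSlope, logb, ← mul_div_assoc, div_right_comm _ (log 2)]
  exact div_lt_div_of_pos_right hsec (log_pos one_lt_two)

lemma mulLogbSlope_le_mulLogbSlope_iff {a b : ℕ} (ha : 2 ≤ a) (hb : 2 ≤ b) :
    mulLogbSlope a ≤ mulLogbSlope b ↔ a ≤ b := by
  rw [strictMonoOn_mulLogbSlope.le_iff_le (by simp; omega) (by simp; omega), Nat.cast_le]

lemma mulLogbSlope_inj {a b : ℕ} (ha : 2 ≤ a) (hb : 2 ≤ b) :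
    mulLogbSlope a = mulLogbSlope b ↔ a = b := by
  rw [strictMonoOn_mulLogbSlope.injOn.eq_iff (by simp; omega) (by simp; omega), Nat.cast_inj]

lemma two_mul_sub_one_le_mul_logb (d : ℕ) : 2 * ((d : ℝ) - 1) ≤ d * logb 2 d := by
  rw [mul_logb_eq_sub_one_mul_mulLogbSlope, ← mulLogbSlope_two, mul_comm]
  rcases Nat.lt_or_ge d 2 with hd | hd
  · interval_cases d <;> norm_num [mulLogbSlope]
  · gcongr
    · simp only [sub_nonneg, Nat.one_le_cast]; omega
    · exact_mod_cast (mulLogbSlope_le_mulLogbSlope_iff le_rfl hd).2 hd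

lemma two_mul_sub_one_eq_mul_logb_iff {d : ℕ} (hd : 1 ≤ d) :
    2 * ((d : ℝ) - 1) = d * logb 2 d ↔ d ≤ 2 := by
  rw [mul_logb_eq_sub_one_mul_mulLogbSlope, ← mulLogbSlope_two, mul_comm]
  rcases hd.eq_or_lt with rfl | hd
  · simp
  · have hd1 : (d : ℝ) - 1 ≠ 0 := sub_ne_zero.2 (by exact_mod_cast hd.ne')
    rw [mul_right_inj' hd1, show (2 : ℝ) = ((2 : ℕ) : ℝ) by norm_num,
      mulLogbSlope_inj le_rfl hd]
    omega

lemma mul_logb_le_sub_one_mul_mulLogbSlope {d m : ℕ} (hd : 1 ≤ d) (hdm : d ≤ m) :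
    d * logb 2 d ≤ ((d : ℝ) - 1) * mulLogbSlope m := by
  rw [mul_logb_eq_sub_one_mul_mulLogbSlope]
  rcases hd.eq_or_lt with rfl | hd
  · simp
  · gcongr
    · simp only [sub_nonneg, Nat.one_le_cast]; omega
    · exact (mulLogbSlope_le_mulLogbSlope_iff hd (hd.trans_le hdm)).2 hdm

lemma mul_logb_eq_sub_one_mul_mulLogbSlope_iff {d m : ℕ} (hd : 1 ≤ d) (hdm : d ≤ m) :
    d * logb 2 d = ((d : ℝ) - 1) * mulLogbSlope m ↔ d = 1 ∨ d = m := by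
  rw [mul_logb_eq_sub_one_mul_mulLogbSlope]
  rcases hd.eq_or_lt with rfl | hd
  · simp
  · have hd1 : (d : ℝ) - 1 ≠ 0 := sub_ne_zero.2 (by exact_mod_cast hd.ne')
    rw [mul_right_inj' hd1, mulLogbSlope_inj hd (hd.trans_le hdm)]
    omega

section DegreeSequence

variable {ι : Type*} [Fintype ι] {d : ι → ℕ} {m : ℕ}

lemma le_of_sum_sub_one_eq (hd : ∀ i, 1 ≤ d i) (hsum : ∑ i, ((d i : ℝ) - 1) = m - 1) (i : ι) :
    d i ≤ m := by
  have hle : (d i : ℝ) - 1 ≤ ∑ j, ((d j : ℝ) - 1) :=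
    Finset.single_le_sum (f := fun j => (d j : ℝ) - 1) (fun j _ => by simpa using hd j)
      (Finset.mem_univ i)
  exact_mod_cast (by linarith : (d i : ℝ) ≤ m)

lemma two_mul_sub_one_le_sum_mul_logb (hsum : ∑ i, ((d i : ℝ) - 1) = m - 1) :
    2 * ((m : ℝ) - 1) ≤ ∑ i, (d i : ℝ) * logb 2 (d i) := by
  rw [← hsum, Finset.mul_sum]
  exact Finset.sum_le_sum fun i _ => two_mul_sub_one_le_mul_logb (d i)

lemma two_mul_sub_one_eq_sum_mul_logb_iff (hd : ∀ i, 1 ≤ d i)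
    (hsum : ∑ i, ((d i : ℝ) - 1) = m - 1) :
    2 * ((m : ℝ) - 1) = ∑ i, (d i : ℝ) * logb 2 (d i) ↔ ∀ i, d i ≤ 2 := by
  rw [← hsum, Finset.mul_sum,
    Finset.sum_eq_sum_iff_of_le fun i _ => two_mul_sub_one_le_mul_logb (d i)]
  simp [two_mul_sub_one_eq_mul_logb_iff (hd _)]

lemma sum_mul_logb_eq_sum_sub_one_mul (hsum : ∑ i, ((d i : ℝ) - 1) = m - 1) :
    (m : ℝ) * logb 2 m = ∑ i, ((d i : ℝ) - 1) * mulLogbSlope m := by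
  rw [← Finset.sum_mul, hsum, mul_logb_eq_sub_one_mul_mulLogbSlope]

lemma sum_mul_logb_le (hd : ∀ i, 1 ≤ d i) (hsum : ∑ i, ((d i : ℝ) - 1) = m - 1) :
    ∑ i, (d i : ℝ) * logb 2 (d i) ≤ m * logb 2 m := by
  rw [sum_mul_logb_eq_sum_sub_one_mul hsum]
  exact Finset.sum_le_sum fun i _ =>
    mul_logb_le_sub_one_mul_mulLogbSlope (hd i) (le_of_sum_sub_one_eq hd hsum i)

lemma forall_eq_one_or_eq_iff_exists_eq (hm : 2 ≤ m) (hd : ∀ i, 1 ≤ d i)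
    (hsum : ∑ i, ((d i : ℝ) - 1) = m - 1) :
    (∀ i, d i = 1 ∨ d i = m) ↔ ∃ i, d i = m := by
  constructor
  · intro h
    by_contra! hne
    have hzero : ∑ i, ((d i : ℝ) - 1) = 0 :=
      Finset.sum_eq_zero fun i _ => by simp [(h i).resolve_right (hne i)]
    have : (m : ℝ) ≥ 2 := by exact_mod_cast hm
    linarith
  · classical
    rintro ⟨i, hi⟩ j
    by_cases hji : j = i
    · exact Or.inr (hji ▸ hi)
    refine Or.inl (le_antisymm ?_ (hd j))
    -- the excess `d i - 1 = m - 1` already exhausts the total excess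
    have hpair : ((d i : ℝ) - 1) + ((d j : ℝ) - 1) ≤ ∑ l, ((d l : ℝ) - 1) := by
      rw [← Finset.sum_pair (f := fun l => (d l : ℝ) - 1) (Ne.symm hji)]
      exact Finset.sum_le_sum_of_subset_of_nonneg (Finset.subset_univ _)
        fun l _ _ => by simpa using hd l
    rw [hsum, hi] at hpair
    exact_mod_cast (by linarith : (d j : ℝ) ≤ 1)

lemma sum_mul_logb_eq_iff (hm : 2 ≤ m) (hd : ∀ i, 1 ≤ d i)
    (hsum : ∑ i, ((d i : ℝ) - 1) = m - 1) :
    ∑ i, (d i : ℝ) * logb 2 (d i) = m * logb 2 m ↔ ∃ i, d i = m := by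
  have hle i := le_of_sum_sub_one_eq hd hsum i
  rw [sum_mul_logb_eq_sum_sub_one_mul hsum, Finset.sum_eq_sum_iff_of_le fun i _ =>
      mul_logb_le_sub_one_mul_mulLogbSlope (hd i) (hle i),
    ← forall_eq_one_or_eq_iff_exists_eq hm hd hsum]
  simp [mul_logb_eq_sub_one_mul_mulLogbSlope_iff (hd _) (hle _)]

end DegreeSequence

section Hypergraph

variable {V : Type*} [DecidableEq V] {E : Finset (Finset V)} {k : ℕ}

lemma one_le_hdeg [Nontrivial V] (hc : hconn E) (v : V) : 1 ≤ hdeg E v := by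
  obtain ⟨u, hvu⟩ := hc.preconnected.exists_adj_of_nontrivial v
  obtain ⟨e, he, hve⟩ : ∃ e ∈ E, v ∈ e := by
    rcases (SimpleGraph.fromRel_adj _ _ _).1 hvu with ⟨-, ⟨e, he, hve, -⟩ | ⟨e, he, -, hve⟩⟩ <;>
      exact ⟨e, he, hve⟩
  exact Finset.card_pos.2 ⟨e, Finset.mem_filter.2 ⟨he, hve⟩⟩

variable [Fintype V]

lemma sum_hdeg (hunif : ∀ e ∈ E, e.card = k) : ∑ v, hdeg E v = E.card * k := by
  have hcount := Finset.sum_card_bipartiteAbove_eq_sum_card_bipartiteBelow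
    (fun (v : V) (e : Finset V) => v ∈ e) (s := Finset.univ) (t := E)
  simp only [Finset.bipartiteAbove, Finset.bipartiteBelow, Finset.filter_univ_mem] at hcount
  rw [Finset.sum_congr rfl fun e he => hunif e he, Finset.sum_const, smul_eq_mul] at hcount
  exact hcount

lemma sum_hdeg_sub_one (hunif : ∀ e ∈ E, e.card = k) (hk : 1 ≤ k)
    (hcard : Fintype.card V = E.card * (k - 1) + 1) :
    ∑ v, ((hdeg E v : ℝ) - 1) = E.card - 1 := by
  rw [Finset.sum_sub_distrib, ← Nat.cast_sum, sum_hdeg hunif, Finset.sum_const,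
    Finset.card_univ, hcard, nsmul_one, Nat.cast_add, Nat.cast_mul, Nat.cast_mul, Nat.cast_sub hk]
  push_cast
  ring

end Hypergraph

lemma entropy1_eq {V : Type*} [Fintype V] [DecidableEq V] (k m : ℕ) (E : Finset (Finset V)) :
    entropy1 k m E = logb 2 ((k : ℝ) * m) - hval E / (k * m) := by
  rw [entropy1]
  ring

/-- Theorem 1: bounds for the entropy of a k-uniform supertree, with
characterization of the equality cases. -/
theorem stmt_11 {V : Type*} [Fintype V] [DecidableEq V] (k n m : ℕ) (hk : 3 ≤ k)
    (E : Finset (Finset V)) (hunif : ∀ e ∈ E, e.card = k)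
    (hn : Fintype.card V = n) (hm : E.card = m) (hm2 : 2 ≤ m)
    (hc : hconn E) (hacyc : m * (k - 1) = n - 1) :
    (Real.logb 2 ((k : ℝ) * m) - Real.logb 2 m / k ≤ entropy1 k m E ∧
      entropy1 k m E ≤
        Real.logb 2 ((k : ℝ) * m) - 2 * ((m : ℝ) - 1) / ((k : ℝ) * m)) ∧
    (entropy1 k m E = Real.logb 2 ((k : ℝ) * m) - Real.logb 2 m / k ↔
      ∃ v : V, hdeg E v = m) ∧
    (entropy1 k m E =
        Real.logb 2 ((k : ℝ) * m) - 2 * ((m : ℝ) - 1) / ((k : ℝ) * m) ↔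
      ∀ v : V, hdeg E v ≤ 2) := by
  have hcard : Fintype.card V = m * (k - 1) + 1 := by
    have := Fintype.card_pos_iff.2 hc.nonempty
    omega
  have : Nontrivial V := Fintype.one_lt_card_iff_nontrivial.1 <| by
    have := Nat.mul_pos (by omega : 0 < m) (by omega : 0 < k - 1)
    omega
  have hd : ∀ v, 1 ≤ hdeg E v := one_le_hdeg hc
  have hsum : ∑ v, ((hdeg E v : ℝ) - 1) = m - 1 :=
    hm ▸ sum_hdeg_sub_one hunif (by omega) (hm ▸ hcard)
  have hkm : (0 : ℝ) < k * m := by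
    have : 0 < k * m := Nat.mul_pos (by omega) (by omega)
    exact_mod_cast this
  have hlogb_div : logb 2 m / k = m * logb 2 m / (k * m) := by
    field_simp
  rw [entropy1_eq, hlogb_div]
  simp only [sub_le_sub_iff_left, sub_right_inj, div_le_div_iff_of_pos_right hkm,
    div_left_inj' hkm.ne', hval]
  exact ⟨⟨sum_mul_logb_le hd hsum, two_mul_sub_one_le_sum_mul_logb hsum⟩,
    sum_mul_logb_eq_iff hm2 hd hsum, eq_comm.trans (two_mul_sub_one_eq_sum_mul_logb_iff hd hsum)⟩
end
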